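/- arXiv:0709.1191 — 4 statements merged into one kernel-verified Lean document; each statement's English description precedes it below -/
import Mathlib

section
/- For a partition I with conjugate partition I~, the determinant of the matrix with (p,q)-entry h_{i_p − p + q} equals the determinant of the matrix with (p,q)-entry e_{i~_p − p + q}, where h_k are complete homogeneous and e_k are elementary symmetric polynomials; i.e., the Jacobi–Trudi and dual Jacobi–Trudi determinants both compute the Schur polynomial s_I. -/
/-!
The Toeplitz matrices `H = (h_{r-s})` and `E = ((-1)^(r+s) e_{r-s})` of any size are inverse to
each other, because `∑_{i+j=m} (-1)^i e_i h_j = 0` for `m > 0`: expanding the product, the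
monomials are indexed by pairs (set `S`, multiset `t`), and moving a variable of `S + t`, chosen as
a function of `S + t` alone, between `S` and `t` is a sign-reversing involution.

For `N = l + l'` the numbers `μ.rowLen (l-1-p) + p` (`p < l`) and `l + q - μ.colLen q` (`q < l'`)
are a permutation of `0, …, N - 1` (Macdonald, I (1.7)). Jacobi's complementary minor theorem, in
the form `det M₁₁ = det M * det E₂₂` for `M * E = 1`, applied to `H` with its rows reordered by this
permutation, identifies the Jacobi–Trudi determinant (the minor of `H` on the first family of rows
and the first `l` columns) with the complementary minor of `E`, which is the transposed dual
Jacobi–Trudi matrix up to diagonal signs. The sign of the permutation and the diagonal signs both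
come to `(-1)^|μ|`.
-/

set_option autoImplicit false

open MvPolynomial

/-- Complete homogeneous symmetric polynomial with the convention `h_m = 0` for `m < 0`. -/
noncomputable def hInt (n : ℕ) (k : ℤ) : MvPolynomial (Fin n) ℤ :=
  if 0 ≤ k then hsymm (Fin n) ℤ k.toNat else 0

/-- Elementary symmetric polynomial with the convention `e_m = 0` for `m < 0`. -/
noncomputable def eInt (n : ℕ) (k : ℤ) : MvPolynomial (Fin n) ℤ :=
  if 0 ≤ k then esymm (Fin n) ℤ k.toNat else 0

open Finset Equiv Matrix

namespace MvPolynomial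

section Toggle

variable {σ : Type*} [DecidableEq σ]

def toggle (j : σ) (x : Finset σ × Multiset σ) : Finset σ × Multiset σ :=
  if j ∈ x.1 then (x.1.erase j, j ::ₘ x.2) else (insert j x.1, x.2.erase j)

theorem toggle_ne (j : σ) (x : Finset σ × Multiset σ) : toggle j x ≠ x := by
  unfold toggle
  split_ifs with hj <;> intro h <;> have h1 := congrArg Prod.fst h <;> dsimp only at h1
  · exact notMem_erase j x.1 (by rw [h1]; exact hj)
  · exact hj (h1 ▸ mem_insert_self j x.1)

theorem neg_one_pow_card_toggle {R : Type*} [Ring R] (j : σ) (x : Finset σ × Multiset σ) :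
    (-1 : R) ^ #(toggle j x).1 = -(-1) ^ #x.1 := by
  unfold toggle
  split_ifs with hj
  · rw [← card_erase_add_one hj, pow_succ, mul_neg_one, neg_neg]
  · rw [card_insert_of_notMem hj, pow_succ, mul_neg_one]

variable {j : σ} {x : Finset σ × Multiset σ}

theorem toggle_support (hj : j ∈ x.1.val + x.2) :
    (toggle j x).1.val + (toggle j x).2 = x.1.val + x.2 := by
  unfold toggle
  split_ifs with h
  · rw [erase_val, Multiset.add_cons, ← Multiset.cons_add, Multiset.cons_erase h]
  · have : j ∈ x.2 := (Multiset.mem_add.mp hj).resolve_left h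
    rw [insert_val_of_notMem h, Multiset.cons_add, ← Multiset.add_cons, Multiset.cons_erase this]

theorem toggle_toggle (hj : j ∈ x.1.val + x.2) : toggle j (toggle j x) = x := by
  unfold toggle
  by_cases h : j ∈ x.1
  · simp [h, insert_erase h]
  · have : j ∈ x.2 := (Multiset.mem_add.mp hj).resolve_left h
    simp [h, erase_insert h, Multiset.cons_erase this]

end Toggle

variable {σ R : Type*} [Fintype σ] [DecidableEq σ] [CommRing R]

variable (σ) in
def pairsOfCard (m : ℕ) : Finset (Finset σ × Multiset σ) :=
  (antidiagonal m).biUnion fun p => powersetCard p.1 univ ×ˢ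
    (univ : Finset (Sym σ p.2)).map ⟨Sym.toMultiset, Sym.coe_injective⟩

theorem mem_pairsOfCard {m : ℕ} {x : Finset σ × Multiset σ} :
    x ∈ pairsOfCard σ m ↔ #x.1 + Multiset.card x.2 = m := by
  simp only [pairsOfCard, mem_biUnion, HasAntidiagonal.mem_antidiagonal, mem_product,
    mem_powersetCard_univ, mem_map, mem_univ, true_and, Function.Embedding.coeFn_mk]
  constructor
  · rintro ⟨p, rfl, h1, s, hs⟩
    rw [h1, ← hs, Sym.card_coe]
  · intro h
    exact ⟨(#x.1, Multiset.card x.2), h, rfl, ⟨x.2, rfl⟩, rfl⟩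

theorem esymm_mul_hsymm (k j : ℕ) :
    esymm σ R k * hsymm σ R j = ∑ x ∈ powersetCard k univ ×ˢ
      (univ : Finset (Sym σ j)).map ⟨Sym.toMultiset, Sym.coe_injective⟩,
      ((x.1.val + x.2).map X).prod := by
  simp only [esymm, hsymm, sum_mul_sum, sum_product, sum_map]
  simp [Multiset.prod_add]

theorem sum_antidiagonal_esymm_mul_hsymm_eq_sum_pairsOfCard (m : ℕ) :
    ∑ p ∈ antidiagonal m, (-1) ^ p.1 * esymm σ R p.1 * hsymm σ R p.2 =
      ∑ x ∈ pairsOfCard σ m, (-1) ^ #x.1 * ((x.1.val + x.2).map X).prod := by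
  rw [pairsOfCard, sum_biUnion]
  · refine sum_congr rfl fun p _ => ?_
    rw [mul_assoc, esymm_mul_hsymm, mul_sum]
    refine sum_congr rfl fun x hx => ?_
    rw [mem_powersetCard_univ.mp (mem_product.mp hx).1]
  · intro p hp q hq hpq
    refine disjoint_left.mpr fun x hxp hxq => hpq ?_
    rw [mem_product, mem_powersetCard_univ] at hxp hxq
    rw [mem_coe, HasAntidiagonal.mem_antidiagonal] at hp hq
    ext <;> omega

theorem sum_antidiagonal_neg_one_pow_mul_esymm_mul_hsymm {m : ℕ} (hm : m ≠ 0) :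
    ∑ p ∈ antidiagonal m, (-1) ^ p.1 * esymm σ R p.1 * hsymm σ R p.2 = 0 := by
  have card_support (x : Finset σ × Multiset σ) :
      Multiset.card (x.1.val + x.2) = #x.1 + Multiset.card x.2 := by
    rw [Multiset.card_add, card_val]
  have support_ne (x) (hx : x ∈ pairsOfCard σ m) : ∃ j, j ∈ x.1.val + x.2 := by
    refine Multiset.exists_mem_of_ne_zero fun h => hm ?_
    rw [← mem_pairsOfCard.mp hx, ← card_support, h, Multiset.card_zero]
  have choose_congr {s t : Multiset σ} (hs : ∃ j, j ∈ s) (ht : ∃ j, j ∈ t) (h : s = t) :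
      hs.choose = ht.choose := by
    subst h; rfl
  rw [sum_antidiagonal_esymm_mul_hsymm_eq_sum_pairsOfCard]
  refine sum_involution (fun x hx => toggle (support_ne x hx).choose x) ?_ ?_ ?_ ?_
  · intro x hx
    rw [toggle_support (support_ne x hx).choose_spec, neg_one_pow_card_toggle, neg_mul,
      add_neg_cancel]
  · exact fun x _ _ => toggle_ne _ x
  · intro x hx
    rw [mem_pairsOfCard, ← card_support, toggle_support (support_ne x hx).choose_spec,
      card_support, mem_pairsOfCard.mp hx]
  · intro x hx
    rw [choose_congr _ (support_ne x hx) (toggle_support (support_ne x hx).choose_spec),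
      toggle_toggle (support_ne x hx).choose_spec]

end MvPolynomial

theorem Equiv.Perm.sign_eq_neg_one_pow_card_inversions {N : ℕ} (f : Perm (Fin N)) :
    Perm.sign f = (-1) ^ #{x ∈ Perm.finPairsLT N | f x.1 ≤ f x.2} := by
  have sign_eq_signAux : Perm.sign f = Perm.signAux f := by
    induction f using Perm.swap_induction_on with
    | one => rw [map_one, Perm.signAux_one]
    | swap_mul f x y hxy ih =>
      rw [Perm.sign_mul, Perm.signAux_mul, Perm.sign_swap hxy, Perm.signAux_swap hxy, ih]
  rw [sign_eq_signAux, Perm.signAux, prod_ite, prod_const, prod_const_one, mul_one]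

theorem card_filter_inl_lt_add_card_filter_inr_lt {α β γ : Type*} [Fintype α] [Fintype β]
    [Fintype γ] [LinearOrder γ] (e : α ⊕ β ≃ γ) (v : γ) :
    #{a | e (.inl a) < v} + #{b | e (.inr b) < v} = #{c | c < v} := by
  rw [← card_disjSum]
  exact card_equiv e fun x => by cases x <;> simp

section Shuffle

variable {l l' : ℕ} (e : Fin l ⊕ Fin l' ≃ Fin (l + l'))

theorem card_filter_apply_inr_lt_apply_inl (hb : StrictMono (e ∘ Sum.inr)) (q : Fin l') :
    #{p | e (.inr q) < e (.inl p)} = l + q - e (.inr q) := by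
  have below := card_filter_inl_lt_add_card_filter_inr_lt e (e (.inr q))
  have below_inr : #{q' | e (.inr q') < e (.inr q)} = q := by
    simp_rw [← Function.comp_apply (f := e) (g := Sum.inr), hb.lt_iff_lt, filter_gt_eq_Iio,
      Fin.card_Iio]
  have split := card_filter_add_card_filter_not (s := univ) fun p => e (.inl p) < e (.inr q)
  have not_lt_iff (p : Fin l) : ¬ e (.inl p) < e (.inr q) ↔ e (.inr q) < e (.inl p) :=
    not_lt.trans (le_iff_lt_or_eq.trans
      (or_iff_left fun h => Sum.inl_ne_inr (e.injective h.symm)))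
  simp only [not_lt_iff, filter_gt_eq_Iio, Fin.card_Iio, card_univ, Fintype.card_fin]
    at split below
  omega

theorem card_inversions_finSumFinEquiv_symm_trans (ha : StrictMono (e ∘ Sum.inl))
    (hb : StrictMono (e ∘ Sum.inr)) :
    #{x ∈ Perm.finPairsLT (l + l') | (finSumFinEquiv.symm.trans e) x.1 ≤
      (finSumFinEquiv.symm.trans e) x.2} =
      #{x : Fin l × Fin l' | e (.inr x.2) < e (.inl x.1)} := by
  set π : Perm (Fin (l + l')) := finSumFinEquiv.symm.trans e
  have π_castAdd (p : Fin l) : π (Fin.castAdd l' p) = e (.inl p) := by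
    simp [π, finSumFinEquiv_symm_apply_castAdd]
  have π_natAdd (q : Fin l') : π (Fin.natAdd l q) = e (.inr q) := by
    simp [π, finSumFinEquiv_symm_apply_natAdd]
  symm
  refine card_bij (fun x _ => ⟨Fin.natAdd l x.2, Fin.castAdd l' x.1⟩) ?_ ?_ ?_
  · rintro ⟨p, q⟩ h
    simp only [mem_filter, mem_univ, true_and] at h
    simp only [mem_filter, Perm.mem_finPairsLT, π_castAdd, π_natAdd, h.le, and_true, Fin.lt_def,
      Fin.val_castAdd, Fin.val_natAdd]
    omega
  · rintro ⟨p, q⟩ _ ⟨p', q'⟩ _ h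
    simp only [Sigma.mk.inj_iff, Fin.natAdd_inj, heq_eq_eq, Fin.castAdd_inj] at h
    rw [h.1, h.2]
  · rintro ⟨i, j⟩ h
    rw [mem_filter, Perm.mem_finPairsLT] at h
    obtain ⟨hji, hπ⟩ := h
    induction i using Fin.addCases with
    | left p =>
      induction j using Fin.addCases with
      | left p' =>
        rw [π_castAdd, π_castAdd] at hπ
        exact absurd hπ (not_le.mpr (ha ((Fin.strictMono_castAdd l').lt_iff_lt.mp hji)))
      | right q =>
        simp only [Fin.lt_def, Fin.val_castAdd, Fin.val_natAdd] at hji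
        omega
    | right q =>
      induction j using Fin.addCases with
      | left p =>
        rw [π_natAdd, π_castAdd] at hπ
        refine ⟨(p, q), ?_, rfl⟩
        simp only [mem_filter, mem_univ, true_and]
        exact hπ.lt_of_ne fun h => Sum.inr_ne_inl (e.injective h)
      | right q' =>
        rw [π_natAdd, π_natAdd] at hπ
        exact absurd hπ (not_le.mpr (hb ((Fin.natAdd_lt_natAdd_iff l).mp hji)))

theorem sign_finSumFinEquiv_symm_trans (ha : StrictMono (e ∘ Sum.inl))
    (hb : StrictMono (e ∘ Sum.inr)) :
    Perm.sign (finSumFinEquiv.symm.trans e) = (-1) ^ ∑ q : Fin l', (l + q - e (.inr q)) := by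
  rw [Perm.sign_eq_neg_one_pow_card_inversions, card_inversions_finSumFinEquiv_symm_trans e ha hb,
    card_filter, Fintype.sum_prod_type_right]
  simp only [← card_filter, card_filter_apply_inr_lt_apply_inl e hb]

end Shuffle

theorem Matrix.det_toBlocks₁₁_eq_det_mul_det_toBlocks₂₂_of_mul_eq_one {m n R : Type*}
    [Fintype m] [Fintype n] [DecidableEq m] [DecidableEq n] [CommRing R]
    {M E : Matrix (m ⊕ n) (m ⊕ n) R} (h : M * E = 1) :
    M.toBlocks₁₁.det = M.det * E.toBlocks₂₂.det := by
  rw [← fromBlocks_toBlocks M, ← fromBlocks_toBlocks E, fromBlocks_multiply, ← fromBlocks_one,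
    fromBlocks_inj] at h
  have triangular : M * fromBlocks 1 E.toBlocks₁₂ 0 E.toBlocks₂₂ =
      fromBlocks M.toBlocks₁₁ 0 M.toBlocks₂₁ 1 := by
    rw [← fromBlocks_toBlocks M, fromBlocks_multiply, h.2.1, h.2.2.2]
    simp
  simpa [det_fromBlocks_zero₂₁, det_fromBlocks_zero₁₂] using (congrArg det triangular).symm

theorem Matrix.det_submatrix_equiv {m n R : Type*} [Fintype m] [Fintype n] [DecidableEq m]
    [DecidableEq n] [CommRing R] (A : Matrix m m R) (e f : n ≃ m) :
    (A.submatrix e f).det = Perm.sign (f.symm.trans e) * A.det := by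
  rw [← det_permute, ← det_submatrix_equiv_self f, submatrix_submatrix]
  congr
  ext x
  simp

section Toeplitz

variable {n : ℕ}

theorem hInt_of_neg {k : ℤ} (h : k < 0) : hInt n k = 0 := if_neg h.not_ge

theorem eInt_of_neg {k : ℤ} (h : k < 0) : eInt n k = 0 := if_neg h.not_ge

@[simp]
theorem hInt_natCast (k : ℕ) : hInt n k = hsymm (Fin n) ℤ k := by
  simp [hInt]

@[simp]
theorem eInt_natCast (k : ℕ) : eInt n k = esymm (Fin n) ℤ k := by
  simp [eInt]

theorem sum_range_hInt_mul_eInt {N r s : ℕ} (hr : r < N) :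
    ∑ t ∈ range N, hInt n (r - t) * ((-1) ^ (t + s) * eInt n (t - s)) =
      if r = s then 1 else 0 := by
  have vanish (t : ℕ) (ht : t < s ∨ r < t) :
      hInt n (r - t) * ((-1) ^ (t + s) * eInt n (t - s)) = 0 := by
    rcases ht with ht | ht
    · rw [eInt_of_neg (by omega), mul_zero, mul_zero]
    · rw [hInt_of_neg (by omega), zero_mul]
  rcases le_or_gt s r with hsr | hrs
  · obtain ⟨m, rfl⟩ := Nat.exists_eq_add_of_le hsr
    have support : Ico s (s + m + 1) ⊆ range N := fun t ht => by
      rw [mem_Ico] at ht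
      rw [mem_range]
      omega
    have term (k : ℕ) (hk : k ∈ range (m + 1)) :
        hInt n ((s + m : ℕ) - (s + k : ℕ)) * ((-1) ^ (s + k + s) * eInt n ((s + k : ℕ) - s)) =
          (-1) ^ k * esymm (Fin n) ℤ k * hsymm (Fin n) ℤ (m - k) := by
      rw [mem_range] at hk
      rw [show ((s + m : ℕ) : ℤ) - (s + k : ℕ) = (m - k : ℕ) by omega,
        show ((s + k : ℕ) : ℤ) - s = k by omega, hInt_natCast, eInt_natCast,
        show s + k + s = k + (s + s) by ring, pow_add, Even.neg_one_pow ⟨s, rfl⟩]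
      ring
    rw [← sum_subset support fun t _ ht => vanish t (by rw [mem_Ico] at ht; omega),
      sum_Ico_eq_sum_range, show s + m + 1 - s = m + 1 by omega, sum_congr rfl term,
      ← Nat.sum_antidiagonal_eq_sum_range_succ fun i j =>
        (-1) ^ i * esymm (Fin n) ℤ i * hsymm (Fin n) ℤ j]
    rcases eq_or_ne m 0 with rfl | hm
    · simp
    · rw [sum_antidiagonal_neg_one_pow_mul_esymm_mul_hsymm hm, if_neg (by omega)]
  · rw [if_neg hrs.ne, sum_eq_zero fun t _ => vanish t (by omega)]

variable (n)

noncomputable def hMatrix (N : ℕ) : Matrix (Fin N) (Fin N) (MvPolynomial (Fin n) ℤ) :=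
  of fun r s => hInt n (r - s)

noncomputable def eMatrix (N : ℕ) : Matrix (Fin N) (Fin N) (MvPolynomial (Fin n) ℤ) :=
  of fun r s => (-1) ^ (r + s : ℕ) * eInt n (r - s)

theorem hMatrix_mul_eMatrix (N : ℕ) : hMatrix n N * eMatrix n N = 1 := by
  refine Matrix.ext fun r s => ?_
  simp only [hMatrix, eMatrix, mul_apply, of_apply, one_apply, ← Fin.val_inj]
  exact (Fin.sum_univ_eq_sum_range
    (fun t => hInt n (r - t) * ((-1) ^ (t + s) * eInt n (t - s))) N).trans
    (sum_range_hInt_mul_eInt r.isLt)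

theorem det_hMatrix (N : ℕ) : (hMatrix n N).det = 1 := by
  have lower : (hMatrix n N).IsLowerTriangular := by
    intro r s hrs
    exact hInt_of_neg (by simpa using hrs)
  rw [det_of_isLowerTriangular _ lower]
  simp [hMatrix, hInt, hsymm_zero]

noncomputable def jacobiTrudi (μ : YoungDiagram) (l : ℕ) :
    Matrix (Fin l) (Fin l) (MvPolynomial (Fin n) ℤ) :=
  of fun p q => hInt n ((μ.rowLen p : ℤ) - (p : ℤ) + (q : ℤ))

noncomputable def dualJacobiTrudi (μ : YoungDiagram) (l' : ℕ) :
    Matrix (Fin l') (Fin l') (MvPolynomial (Fin n) ℤ) :=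
  of fun p q => eInt n ((μ.transpose.rowLen p : ℤ) - (p : ℤ) + (q : ℤ))

end Toeplitz

namespace YoungDiagram

variable (μ : YoungDiagram) {l l' : ℕ}

def shuffleIndex (l l' : ℕ) : Fin l ⊕ Fin l' → ℕ :=
  Sum.elim (fun p => μ.rowLen (l - 1 - p) + p) (fun q => l + q - μ.colLen q)

theorem rowLen_add_ne_add_sub_colLen {p : ℕ} (hp : p < l) (q : ℕ) :
    μ.rowLen (l - 1 - p) + p ≠ l + q - μ.colLen q := by
  by_cases hmem : (l - 1 - p, q) ∈ μ
  · have := mem_iff_lt_rowLen.mp hmem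
    have := mem_iff_lt_colLen.mp hmem
    omega
  · have := not_lt.mp (mt mem_iff_lt_rowLen.mpr hmem)
    have := not_lt.mp (mt mem_iff_lt_colLen.mpr hmem)
    omega

theorem strictMono_rowLen_add (l : ℕ) :
    StrictMono fun p : Fin l => μ.rowLen (l - 1 - p) + p := by
  intro p p' h
  have := μ.rowLen_anti (l - 1 - p') (l - 1 - p) (by omega)
  simp only [Fin.lt_def] at h ⊢
  omega

theorem strictMono_add_sub_colLen (hl : μ.colLen 0 ≤ l) :
    StrictMono fun q : ℕ => l + q - μ.colLen q := by
  intro q q' h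
  have := μ.colLen_anti q q' h.le
  have := μ.colLen_anti 0 q q.zero_le
  dsimp only
  omega

theorem shuffleIndex_injective (hl : μ.colLen 0 ≤ l) :
    Function.Injective (μ.shuffleIndex l l') := by
  rintro (p | q) (p' | q') h <;> simp only [shuffleIndex, Sum.elim_inl, Sum.elim_inr] at h
  · rw [(μ.strictMono_rowLen_add l).injective h]
  · exact absurd h (μ.rowLen_add_ne_add_sub_colLen p.isLt q')
  · exact absurd h.symm (μ.rowLen_add_ne_add_sub_colLen p'.isLt q)
  · rw [Fin.ext ((μ.strictMono_add_sub_colLen hl).injective h)]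

theorem shuffleIndex_lt (hl' : μ.rowLen 0 ≤ l') (x : Fin l ⊕ Fin l') :
    μ.shuffleIndex l l' x < l + l' := by
  rcases x with p | q
  · have := μ.rowLen_anti 0 (l - 1 - p) (Nat.zero_le _)
    simp only [shuffleIndex, Sum.elim_inl]
    omega
  · simp only [shuffleIndex, Sum.elim_inr]
    omega

variable (hl : μ.colLen 0 ≤ l) (hl' : μ.rowLen 0 ≤ l')

noncomputable def shuffleEquiv : Fin l ⊕ Fin l' ≃ Fin (l + l') :=
  Equiv.ofBijective (fun x => ⟨μ.shuffleIndex l l' x, μ.shuffleIndex_lt hl' x⟩)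
    ((Fintype.bijective_iff_injective_and_card _).mpr
      ⟨fun _ _ h => μ.shuffleIndex_injective hl (Fin.val_eq_of_eq h), by simp⟩)

theorem shuffleEquiv_inl (p : Fin l) :
    (μ.shuffleEquiv hl hl' (.inl p) : ℕ) = μ.rowLen (l - 1 - p) + p := rfl

theorem shuffleEquiv_inr (q : Fin l') :
    (μ.shuffleEquiv hl hl' (.inr q) : ℕ) = l + q - μ.colLen q := rfl

theorem sign_shuffleEquiv :
    Perm.sign (finSumFinEquiv.symm.trans (μ.shuffleEquiv hl hl')) =
      (-1) ^ ∑ q : Fin l', μ.colLen q := by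
  rw [sign_finSumFinEquiv_symm_trans (μ.shuffleEquiv hl hl')
    (fun p p' h => Fin.lt_def.mpr (μ.strictMono_rowLen_add l h))
    (fun q q' h => Fin.lt_def.mpr (μ.strictMono_add_sub_colLen hl h))]
  congr 1
  refine sum_congr rfl fun q _ => ?_
  have := μ.colLen_anti 0 q (Nat.zero_le _)
  rw [shuffleEquiv_inr]
  omega

theorem det_jacobiTrudi_eq_det_toBlocks₁₁ {n : ℕ} :
    (jacobiTrudi n μ l).det =
      ((hMatrix n (l + l')).submatrix (μ.shuffleEquiv hl hl') finSumFinEquiv).toBlocks₁₁.det := by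
  rw [← det_submatrix_equiv_self Fin.revPerm]
  congr 1
  refine Matrix.ext fun p q => ?_
  simp only [jacobiTrudi, hMatrix, toBlocks₁₁, submatrix_apply, of_apply, shuffleEquiv_inl,
    finSumFinEquiv_apply_left, Fin.revPerm_apply, Fin.val_rev, Fin.val_castAdd]
  rw [show l - (p + 1) = l - 1 - p by omega]
  congr 1
  omega

theorem det_toBlocks₂₂_eq_det_dualJacobiTrudi {n : ℕ} :
    ((eMatrix n (l + l')).submatrix finSumFinEquiv (μ.shuffleEquiv hl hl')).toBlocks₂₂.det =
      (-1) ^ (∑ q : Fin l', μ.colLen q) * (dualJacobiTrudi n μ l').det := by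
  have entries :
      ((eMatrix n (l + l')).submatrix finSumFinEquiv (μ.shuffleEquiv hl hl')).toBlocks₂₂ =
        diagonal (fun i : Fin l' => (-1) ^ (l + i : ℕ)) * (dualJacobiTrudi n μ l')ᵀ *
          diagonal fun q : Fin l' => (-1) ^ (l + q - μ.colLen q) := by
    refine Matrix.ext fun i q => ?_
    have := μ.colLen_anti 0 q (Nat.zero_le _)
    simp only [eMatrix, dualJacobiTrudi, toBlocks₂₂, submatrix_apply, of_apply, mul_diagonal,
      diagonal_mul, transpose_apply, finSumFinEquiv_apply_right, Fin.val_natAdd, shuffleEquiv_inr,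
      rowLen_transpose, pow_add]
    rw [show ((l + i : ℕ) : ℤ) - (l + q - μ.colLen q : ℕ) = μ.colLen q - q + i by omega]
    ring
  have exponents : ∑ i : Fin l', (l + i : ℕ) =
      ∑ q : Fin l', (l + q - μ.colLen q) + ∑ q : Fin l', μ.colLen q := by
    rw [← sum_add_distrib]
    refine sum_congr rfl fun q _ => ?_
    have := μ.colLen_anti 0 q (Nat.zero_le _)
    omega
  set S := ∑ q : Fin l', (l + q - μ.colLen q)
  rw [entries, det_mul, det_mul, det_diagonal, det_diagonal, det_transpose, prod_pow_eq_pow_sum,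
    prod_pow_eq_pow_sum, exponents, pow_add]
  linear_combination (-1) ^ (∑ q : Fin l', μ.colLen q) * (dualJacobiTrudi n μ l').det *
    (Even.neg_one_pow ⟨S, rfl⟩ : (-1 : MvPolynomial (Fin n) ℤ) ^ (S + S) = 1)

end YoungDiagram

-- `μ.colLen 0` and `μ.rowLen 0` are the numbers of parts of `I` and of `I~`.
/-- The Jacobi–Trudi determinant `det(h_{i_p - p + q})` of a partition and the dual
Jacobi–Trudi determinant `det(e_{ĩ_p - p + q})` of its conjugate partition agree:
both compute the Schur polynomial `s_I`.  Here the partition `I` is encoded as a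
Young diagram `μ`, whose row lengths are the parts `i_p` of `I` and whose column
lengths are the parts `ĩ_p` of the conjugate partition `I~ = μ.transpose`;
`l` (resp. `l'`) is at least the number of parts of `I` (resp. of `I~`). -/
theorem jacobi_trudi_eq_dual_jacobi_trudi (n : ℕ) (μ : YoungDiagram)
    (l l' : ℕ) (hl : μ.colLen 0 ≤ l) (hl' : μ.rowLen 0 ≤ l') :
    Matrix.det (Matrix.of fun p q : Fin l =>
        hInt n ((μ.rowLen p : ℤ) - (p : ℤ) + (q : ℤ))) =
    Matrix.det (Matrix.of fun p q : Fin l' =>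
        eInt n ((μ.transpose.rowLen p : ℤ) - (p : ℤ) + (q : ℤ))) := by
  set e := μ.shuffleEquiv hl hl'
  have inverse : (hMatrix n (l + l')).submatrix e finSumFinEquiv *
      (eMatrix n (l + l')).submatrix finSumFinEquiv e = 1 := by
    rw [submatrix_mul_equiv, hMatrix_mul_eMatrix, submatrix_one_equiv]
  have det_rows : ((hMatrix n (l + l')).submatrix e finSumFinEquiv).det =
      (-1) ^ ∑ q : Fin l', μ.colLen q := by
    rw [det_submatrix_equiv, det_hMatrix, mul_one, μ.sign_shuffleEquiv hl hl']
    simp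
  change (jacobiTrudi n μ l).det = (dualJacobiTrudi n μ l').det
  rw [μ.det_jacobiTrudi_eq_det_toBlocks₁₁ hl hl',
    det_toBlocks₁₁_eq_det_mul_det_toBlocks₂₂_of_mul_eq_one inverse, det_rows,
    μ.det_toBlocks₂₂_eq_det_dualJacobiTrudi hl hl', ← mul_assoc, ← pow_add,
    Even.neg_one_pow ⟨_, rfl⟩, one_mul]
end

section
/- Let I = (i_1,...,i_m) and J = (j_1,...,j_m) be partitions with I ⊇ J (i.e., i_a ≥ j_a for all a). Then the binomial determinant d_{I,J} = det( C(i_a + m − a, j_b + m − b) )_{1 ≤ a,b ≤ m} is a nonnegative integer, where C(n,k) denotes the binomial coefficient. -/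
set_option autoImplicit false

open Finset Matrix

/-! After reversing rows and columns, `p` is monotone and `q` strictly monotone. If `q 0 = 0`,
subtracting from each row its predecessor turns the first column into `e₀`, and by the
hockey-stick identity the row `i + 1` of the remaining minor becomes
`∑_{t ∈ [p i, p (i+1))} C(t, q - 1)`. By multilinearity the determinant is then a sum of binomial
determinants with interlacing, hence strictly increasing, rows `t` and columns `q - 1`, which are
nonnegative by induction on an upper bound for `q`. If `q 0 > 0`, bordering the matrix by a row
`p = 0` and a column `q = 0` leaves the determinant unchanged and brings us back to the first
case. -/

theorem Nat.sum_Ico_choose (q : ℕ) {y x : ℕ} (hyx : y ≤ x) :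
    ∑ t ∈ Ico y x, (t.choose q : ℤ) = x.choose (q + 1) - y.choose (q + 1) := by
  induction x, hyx using Nat.le_induction with
  | base => simp
  | succ x hx ih =>
    rw [sum_Ico_succ_top hx, ih, Nat.choose_succ_succ' x]
    push_cast
    ring

theorem Matrix.det_of_sum_finset {n α R : Type*} [Fintype n] [DecidableEq n] [CommRing R]
    (g : n → α → n → R) (A : n → Finset α) :
    (of fun i => ∑ t ∈ A i, g i t).det = ∑ r ∈ Fintype.piFinset A, (of fun i => g i (r i)).det :=
  (detRowAlternating : (n → R) [⋀^n]→ₗ[R] R).toMultilinearMap.map_sum_finset g A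

theorem Matrix.det_succ_eq_det_submatrix_succ_of_row_zero {R : Type*} [CommRing R] {k : ℕ}
    (M : Matrix (Fin (k + 1)) (Fin (k + 1)) R) (h : M 0 = Pi.single 0 1) :
    M.det = (M.submatrix Fin.succ Fin.succ).det := by
  rw [det_succ_row_zero, Fin.sum_univ_succ, h]
  simp

theorem Matrix.det_succ_eq_det_submatrix_succ_of_col_zero {R : Type*} [CommRing R] {k : ℕ}
    (M : Matrix (Fin (k + 1)) (Fin (k + 1)) R) (h : (fun i => M i 0) = Pi.single 0 1) :
    M.det = (M.submatrix Fin.succ Fin.succ).det := by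
  rw [← det_transpose, det_succ_eq_det_submatrix_succ_of_row_zero _ h, ← det_transpose]
  rfl

theorem strictMono_of_mem_piFinset_Ico {k : ℕ} {s : Fin (k + 1) → ℕ} {r : Fin k → ℕ}
    (hr : r ∈ Fintype.piFinset fun i => Ico (s i.castSucc) (s i.succ)) : StrictMono r := by
  simp only [Fintype.mem_piFinset, mem_Ico] at hr
  cases k with
  | zero => exact fun i => i.elim0
  | succ k =>
  refine Fin.strictMono_iff_lt_succ.2 fun i => ?_
  calc r i.castSucc < s i.castSucc.succ := (hr _).2
    _ = s i.succ.castSucc := by rw [Fin.succ_castSucc]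
    _ ≤ r i.succ := (hr _).1

def binomialMatrix {m n : Type*} (p : m → ℕ) (q : n → ℕ) : Matrix m n ℤ :=
  of fun a b => ((p a).choose (q b) : ℤ)

@[simp]
theorem binomialMatrix_apply {m n : Type*} (p : m → ℕ) (q : n → ℕ) (a : m) (b : n) :
    binomialMatrix p q a b = ((p a).choose (q b) : ℤ) :=
  rfl

theorem det_binomialMatrix_cons_zero_cons_zero {k : ℕ} (p q : Fin k → ℕ) :
    (binomialMatrix (Fin.cons 0 p) (Fin.cons 0 (q · + 1))).det =
      (binomialMatrix p (q · + 1)).det := by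
  rw [det_succ_eq_det_submatrix_succ_of_row_zero]
  · rfl
  · funext j
    cases j using Fin.cases <;> simp

theorem det_binomialMatrix_cons_zero_right_eq_sum {k : ℕ} {s : Fin (k + 1) → ℕ} (hs : Monotone s)
    (q : Fin k → ℕ) :
    (binomialMatrix s (Fin.cons 0 (q · + 1))).det =
      ∑ r ∈ Fintype.piFinset fun i : Fin k => Ico (s i.castSucc) (s i.succ),
        (binomialMatrix r q).det := by
  set A := binomialMatrix s (Fin.cons 0 (q · + 1))
  set B : Matrix (Fin (k + 1)) (Fin (k + 1)) ℤ :=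
    of (Fin.cons (A 0) fun i => A i.succ - A i.castSucc)
  have hrows : A.det = B.det :=
    det_eq_of_forall_row_eq_smul_add_pred (fun _ => 1) (fun _ => rfl) (fun i j => by simp [B])
  have hminor : B.submatrix Fin.succ Fin.succ =
      of fun i => ∑ t ∈ Ico (s i.castSucc) (s i.succ), fun b => (t.choose (q b) : ℤ) := by
    ext i b
    simp [A, B, Finset.sum_apply, Nat.sum_Ico_choose _ (hs i.castSucc_le_succ)]
  rw [hrows, det_succ_eq_det_submatrix_succ_of_col_zero, hminor, det_of_sum_finset]
  · rfl
  · funext i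
    cases i using Fin.cases <;> simp [A, B]

theorem det_binomialMatrix_nonneg {m : ℕ} {p q : Fin m → ℕ} (hp : Monotone p)
    (hq : StrictMono q) : 0 ≤ (binomialMatrix p q).det := by
  obtain ⟨N, hN⟩ : ∃ N, ∀ b, q b < N :=
    ⟨∑ b, q b + 1, fun b => Nat.lt_succ_of_le (single_le_sum (by simp) (mem_univ b))⟩
  induction N generalizing m p q with
  | zero => cases m with
    | zero => simp
    | succ k => exact absurd (hN 0) (Nat.not_lt_zero _)
  | succ N ih =>
    have nonneg_of_cons_zero {k : ℕ} {s : Fin (k + 1) → ℕ} (hs : Monotone s) (q' : Fin k → ℕ)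
        (hq' : StrictMono q') (hN' : ∀ b, q' b < N) :
        0 ≤ (binomialMatrix s (Fin.cons 0 (q' · + 1))).det := by
      rw [det_binomialMatrix_cons_zero_right_eq_sum hs]
      exact sum_nonneg fun r hr => ih (strictMono_of_mem_piFinset_Ico hr).monotone hq' hN'
    cases m with
    | zero => simp
    | succ k =>
    rcases Nat.eq_zero_or_pos (q 0) with hq0 | hq0
    · obtain ⟨q', rfl⟩ : ∃ q' : Fin k → ℕ, q = Fin.cons 0 (q' · + 1) := by
        refine ⟨fun j => q j.succ - 1, funext fun b => ?_⟩
        cases b using Fin.cases with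
        | zero => exact hq0
        | succ j => have := hq j.succ_pos; simp only [Fin.cons_succ]; omega
      exact nonneg_of_cons_zero hp q'
        (fun i j hij => by simpa using hq (Fin.succ_lt_succ_iff.2 hij))
        (fun b => by simpa using hN b.succ)
    · obtain ⟨q', rfl⟩ : ∃ q' : Fin (k + 1) → ℕ, q = (q' · + 1) :=
        ⟨fun b => q b - 1, funext fun b => by
          have := hq.monotone (Fin.zero_le b)
          dsimp only
          omega⟩
      have hp_cons : Monotone (Fin.cons 0 p : Fin (k + 2) → ℕ) := by
        simpa [Fin.insertNth_zero'] using Fin.insertNth_zero_monotone hp 0 (Nat.zero_le _)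
      rw [← det_binomialMatrix_cons_zero_cons_zero]
      exact nonneg_of_cons_zero hp_cons q' (fun i j hij => by simpa using hq hij)
        (fun b => by simpa using hN b)

theorem det_binomialMatrix_nonneg_of_antitone {m : ℕ} {p q : Fin m → ℕ} (hp : Antitone p)
    (hq : StrictAnti q) : 0 ≤ (binomialMatrix p q).det := by
  rw [← det_submatrix_equiv_self Fin.revPerm]
  exact det_binomialMatrix_nonneg (hp.comp Fin.rev_anti) (hq.comp Fin.rev_strictAnti)

theorem binomial_determinant_nonneg_general (m : ℕ) (I J : Fin m → ℕ)
    (hI : Antitone I) (hJ : Antitone J) :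
    0 ≤ Matrix.det (Matrix.of fun a b : Fin m =>
      ((I a + (m - 1 - (a : ℕ))).choose (J b + (m - 1 - (b : ℕ))) : ℤ)) := by
  refine det_binomialMatrix_nonneg_of_antitone (fun a b hab => ?_) (fun a b hab => ?_)
  · have := hI hab
    have : (a : ℕ) ≤ b := hab
    omega
  · have := hJ hab.le
    have : (a : ℕ) < b := hab
    have := b.isLt
    omega

/-- **Nonnegativity of Lascoux's binomial determinants** (Lindström–Gessel–Viennot).
For partitions `I = (i_1 ≥ … ≥ i_m ≥ 0)` and `J = (j_1 ≥ … ≥ j_m ≥ 0)` with `J ⊆ I`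
(`j_a ≤ i_a` for all `a`), the determinant
`d_{I,J} = det( C(i_a + m − a, j_b + m − b) )_{1 ≤ a,b ≤ m}`
is a nonnegative integer.  (Indices are `0`-based below: `a ↦ a+1`, so
`i_a + m − a` becomes `I a + (m − 1 − a)`.) -/
theorem binomial_determinant_nonneg (m : ℕ) (I J : Fin m → ℕ)
    (hI : Antitone I) (hJ : Antitone J) (hJI : ∀ a, J a ≤ I a) :
    0 ≤ Matrix.det (Matrix.of fun a b : Fin m =>
      ((I a + (m - 1 - (a : ℕ))).choose (J b + (m - 1 - (b : ℕ))) : ℤ)) :=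
  binomial_determinant_nonneg_general m I J hI hJ
end

section
/- For partitions I of l parts, let the 'supersymmetric' Schur function S_I(x / y), in variables x = (x_1, ..., x_m) and y = (y_1, ..., y_n), be defined by the determinant det( S_{i_p − p + q}(x/y) ), where Σ S_i(x/y) t^i = Π_j (1 + y_j t) / Π_i (1 − x_i t). Then S_I(x/y) has the cancellation property: S_I(x/y) specialized with x_m = s, y_n = −s is independent of s. -/
set_option autoImplicit false

open MvPolynomial

/-- Extension of a sequence by `0` in negative degrees. -/
def sInt {A : Type*} [CommRing A] (S : ℕ → A) (k : ℤ) : A :=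
  if 0 ≤ k then S k.toNat else 0

/-- **Cancellation property of supersymmetric Schur functions.**
Let `x = (x_1, …, x_{m+1})` and `y = (y_1, …, y_{n+1})` be two sets of variables and
let `S_i(x/y)` be defined by the generating series
`Σ_i S_i(x/y) t^i = Π_j (1 + y_j t) / Π_i (1 − x_i t)`, and
`S_I(x/y) = det( S_{i_p − p + q}(x/y) )_{1 ≤ p,q ≤ l}` for a partition
`I = (i_1 ≥ … ≥ i_l ≥ 0)`.  Then substituting `x_{m+1} = s` and `y_{n+1} = −s`
yields a result independent of `s`: for any commutative ring `R`, any values of the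
remaining variables and any `s, t ∈ R`, the two evaluations agree. -/
theorem supersymmetric_schur_cancellation (m n l : ℕ)
    (S : ℕ → MvPolynomial (Fin (m + 1) ⊕ Fin (n + 1)) ℤ)
    (hS : PowerSeries.mk S *
        ∏ i : Fin (m + 1), (1 - PowerSeries.C (X (Sum.inl i)) * PowerSeries.X)
      = ∏ j : Fin (n + 1), (1 + PowerSeries.C (X (Sum.inr j)) * PowerSeries.X))
    (I : Fin l → ℕ) (hI : Antitone I)
    (R : Type*) [CommRing R] (a : Fin (m + 1) → R) (b : Fin (n + 1) → R) (s t : R) :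
    aeval (Sum.elim (Function.update a (Fin.last m) s)
        (Function.update b (Fin.last n) (-s)))
      (Matrix.det (Matrix.of fun p q : Fin l =>
        sInt S ((I p : ℤ) - (p : ℤ) + (q : ℤ)))) =
    aeval (Sum.elim (Function.update a (Fin.last m) t)
        (Function.update b (Fin.last n) (-t)))
      (Matrix.det (Matrix.of fun p q : Fin l =>
        sInt S ((I p : ℤ) - (p : ℤ) + (q : ℤ)))) := by
  -- Main claim: after substitution, the generating series is independent of the parameter.
  have main : ∀ u : R,
      (PowerSeries.mk fun k => aeval (Sum.elim (Function.update a (Fin.last m) u)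
          (Function.update b (Fin.last n) (-u))) (S k))
        * ∏ i : Fin m, (1 - PowerSeries.C (a i.castSucc) * PowerSeries.X)
      = ∏ j : Fin n, (1 + PowerSeries.C (b j.castSucc) * PowerSeries.X) := by
    intro u
    set v := Sum.elim (Function.update a (Fin.last m) u)
        (Function.update b (Fin.last n) (-u)) with hv
    have h1 := congrArg (PowerSeries.map
        (aeval (R := ℤ) v).toRingHom) hS
    have hmk : PowerSeries.map (aeval (R := ℤ) v).toRingHom (PowerSeries.mk S)
        = PowerSeries.mk fun k => aeval v (S k) := by
      ext k
      simp [PowerSeries.coeff_map, PowerSeries.coeff_mk]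
    rw [map_mul, map_prod, map_prod, hmk] at h1
    simp only [map_sub, map_add, map_one, map_mul, PowerSeries.map_C, PowerSeries.map_X,
      AlgHom.toRingHom_eq_coe, RingHom.coe_coe, aeval_X] at h1
    rw [Fin.prod_univ_castSucc, Fin.prod_univ_castSucc (f := fun j : Fin (n+1) =>
      (1 + PowerSeries.C (v (Sum.inr j)) * PowerSeries.X))] at h1
    have hva : ∀ i : Fin m, v (Sum.inl i.castSucc) = a i.castSucc := by
      intro i
      simp only [hv, Sum.elim_inl, Function.update_of_ne (Fin.castSucc_lt_last i).ne]
    have hvb : ∀ j : Fin n, v (Sum.inr j.castSucc) = b j.castSucc := by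
      intro j
      simp only [hv, Sum.elim_inr, Function.update_of_ne (Fin.castSucc_lt_last j).ne]
    have hval : v (Sum.inl (Fin.last m)) = u := by simp only [hv, Sum.elim_inl, Function.update_self]
    have hvbl : v (Sum.inr (Fin.last n)) = -u := by simp only [hv, Sum.elim_inr, Function.update_self]
    simp only [hval, hvbl, hva, hvb] at h1
    rw [map_neg, neg_mul, ← sub_eq_add_neg] at h1
    have hcanc : IsUnit (1 - PowerSeries.C u * PowerSeries.X) := by
      rw [PowerSeries.isUnit_iff_constantCoeff]
      simp
    have h2 : ((PowerSeries.mk fun k => aeval v (S k))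
        * ∏ i : Fin m, (1 - PowerSeries.C (a i.castSucc) * PowerSeries.X))
        * (1 - PowerSeries.C u * PowerSeries.X)
        = (∏ j : Fin n, (1 + PowerSeries.C (b j.castSucc) * PowerSeries.X))
        * (1 - PowerSeries.C u * PowerSeries.X) := by
      rw [mul_assoc]; exact h1
    exact hcanc.mul_right_cancel h2
  have hAunit : IsUnit (∏ i : Fin m,
      (1 - PowerSeries.C (a i.castSucc) * PowerSeries.X)) := by
    rw [PowerSeries.isUnit_iff_constantCoeff, map_prod]
    simp
  have hmk : (PowerSeries.mk fun k => aeval (Sum.elim (Function.update a (Fin.last m) s)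
          (Function.update b (Fin.last n) (-s))) (S k))
      = PowerSeries.mk fun k => aeval (Sum.elim (Function.update a (Fin.last m) t)
          (Function.update b (Fin.last n) (-t))) (S k) :=
    hAunit.mul_right_cancel ((main s).trans (main t).symm)
  have key : ∀ k : ℕ,
      aeval (Sum.elim (Function.update a (Fin.last m) s)
          (Function.update b (Fin.last n) (-s))) (S k)
      = aeval (Sum.elim (Function.update a (Fin.last m) t)
          (Function.update b (Fin.last n) (-t))) (S k) := by
    intro k
    have := congrArg (PowerSeries.coeff k) hmk
    rwa [PowerSeries.coeff_mk, PowerSeries.coeff_mk] at this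
  rw [AlgHom.map_det, AlgHom.map_det]
  congr 1
  ext p q
  simp only [AlgHom.mapMatrix_apply, Matrix.map_apply, Matrix.of_apply, sInt]
  split_ifs with h
  · exact key _
  · rw [map_zero, map_zero]
end

section
/- The number of semistandard Young tableaux of shape I with entries in {1,...,n} equals the product Π_{(p,q) ∈ I} (n + q − p) / h(p,q), where h(p,q) is the hook length of the cell (p,q); equivalently, s_I(1,1,...,1) (n ones) equals this product. In particular s_I(1,...,1) > 0 whenever I has at most n parts. -/
set_option autoImplicit false

open MvPolynomial

noncomputable def ssytFinset (n : ℕ) (μ : YoungDiagram) :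
    Finset ({c // c ∈ μ.cells} → Fin n) :=
  Finset.univ.filter fun T =>
    (∀ c d : {c // c ∈ μ.cells}, c.1.1 = d.1.1 → c.1.2 ≤ d.1.2 → T c ≤ T d) ∧
    (∀ c d : {c // c ∈ μ.cells}, c.1.2 = d.1.2 → c.1.1 < d.1.1 → T c < T d)

/-- The Schur polynomial of shape `μ` in `n` variables. -/
noncomputable def schurPoly (n : ℕ) (μ : YoungDiagram) : MvPolynomial (Fin n) ℤ :=
  ∑ T ∈ ssytFinset n μ, ∏ c : {c // c ∈ μ.cells}, X (T c)

/-!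
Write `λ` for the row lengths of `μ`, `δ = (n - 1, …, 1, 0)` and `Δ(v) = ∏_{i < j} (v i - v j)`.
Deleting the largest entry `n` from a semistandard tableau with entries `≤ n` leaves a tableau
whose shape `ν` has row lengths `t` interlacing `λ` (`λ (i + 1) ≤ t i ≤ λ i`), and conversely every
tableau of such a shape extends uniquely. On the other side, writing the columns of the
Vandermonde determinant in the binomial basis and subtracting consecutive rows gives
`Δ(λ + δ) = n! ∑_{t interlacing λ} Δ(t + δ)`. By induction on `n` this proves the Weyl dimension
formula `#SSYT_n(μ) · ∏_{i < n} i! = Δ(λ + δ)`.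

With `m = λ + δ`, the hook lengths of row `i` together with the differences `m i - m j`
(`j > i`) are exactly `1, …, m i`, while the contents of row `i` multiply to `m i! / (n - 1 - i)!`.
Multiplying over the rows turns the Weyl formula into the hook content formula.
-/

open Finset Matrix
open scoped Nat

def vandermondeProd {k : ℕ} (v : Fin k → ℕ) : ℤ :=
  ∏ i, ∏ j ∈ Ioi i, ((v i : ℤ) - v j)

def addStaircase {k : ℕ} (a : Fin k → ℕ) : Fin k → ℕ :=
  fun i => a i + (k - 1 - i)

theorem addStaircase_strictAnti {k : ℕ} {a : Fin k → ℕ} (ha : Antitone a) :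
    StrictAnti (addStaircase a) := fun i j hij => by
  have := ha hij.le
  have : (i : ℕ) < j := hij
  have := j.2
  simp only [addStaircase]
  omega

theorem sum_Ico_choose_eq_sub (k : ℕ) {a b : ℕ} (h : a ≤ b) :
    ∑ x ∈ Ico a b, (x.choose k : ℤ) = (b.choose (k + 1) : ℤ) - a.choose (k + 1) := by
  induction b, h using Nat.le_induction with
  | base => simp
  | succ b hab ih =>
    rw [sum_Ico_succ_top hab, ih, Nat.choose_succ_succ' b]
    push_cast
    ring

theorem sum_fin_sub_one_sub_eq_choose_two (k : ℕ) :
    ∑ i : Fin k, (k - 1 - (i : ℕ)) = k.choose 2 := by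
  rw [Fin.sum_univ_eq_sum_range (fun i => k - 1 - i), sum_range_reflect (fun i => i) k,
    sum_range_id, Nat.choose_two_right]

theorem vandermondeProd_eq_det_choose {k : ℕ} (v : Fin k → ℕ) :
    vandermondeProd v = (-1) ^ k.choose 2 * (∏ i : Fin k, ((i : ℕ)! : ℤ)) *
      (of fun i j : Fin k => ((v i).choose j : ℤ)).det := by
  have hflip : vandermondeProd v = (-1) ^ k.choose 2 * (vandermonde fun i => (v i : ℤ)).det := by
    rw [det_vandermonde, ← sum_fin_sub_one_sub_eq_choose_two, ← prod_pow_eq_pow_sum,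
      ← prod_mul_distrib, vandermondeProd]
    refine prod_congr rfl fun i _ => ?_
    rw [← Fin.card_Ioi, ← prod_const, ← prod_mul_distrib]
    exact prod_congr rfl fun j _ => by ring
  -- the monic basis `x (x - 1) ⋯ (x - j + 1) = j! * choose x j` replaces the powers `x ^ j`
  have hchoose : (vandermonde fun i => (v i : ℤ)).det =
      (of fun i j : Fin k => (j : ℕ)! * ((v i).choose j : ℤ)).det := by
    rw [det_eval_matrixOfPolynomials_eq_det_vandermonde _ (fun j => descPochhammer ℤ j)
      (fun j => descPochhammer_natDegree ℤ j) (fun j => monic_descPochhammer ℤ j)]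
    congr 1
    ext i j
    simp [descPochhammer_eval_eq_descFactorial, Nat.descFactorial_eq_factorial_mul_choose]
  rw [hflip, hchoose, mul_assoc]
  exact congrArg _ (det_mul_row (fun j : Fin k => ((j : ℕ)! : ℤ)) _)

theorem det_choose_succ {n : ℕ} (m : Fin (n + 1) → ℕ)
    (hm : ∀ i : Fin n, m i.succ ≤ m i.castSucc) :
    (of fun i j : Fin (n + 1) => ((m i).choose j : ℤ)).det = (-1) ^ n *
      ∑ l ∈ Fintype.piFinset (fun i : Fin n => Ico (m i.succ) (m i.castSucc)),
        (of fun i j : Fin n => ((l i).choose j : ℤ)).det := by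
  -- subtracting from each row its predecessor leaves `e₀` as first column
  have hrows := det_eq_of_forall_row_eq_smul_add_pred (fun _ => 1)
    (A := of fun i j : Fin (n + 1) => ((m i).choose j : ℤ))
    (B := of fun i j : Fin (n + 1) => Fin.cases ((m 0).choose j : ℤ)
      (fun i => ((m i.succ).choose j : ℤ) - (m i.castSucc).choose j) i)
    (fun j => rfl) (fun i j => by simp)
  have hneg : (of fun i j : Fin (n + 1) => Fin.cases ((m 0).choose j : ℤ)
      (fun i => ((m i.succ).choose j : ℤ) - (m i.castSucc).choose j) i).submatrix
        (Fin.succAbove 0) Fin.succ = -(of fun i j : Fin n =>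
          ((m i.castSucc).choose (j + 1) : ℤ) - (m i.succ).choose (j + 1)) := by
    ext i j
    simp
  have hrow_sum : ∀ i : Fin n, (fun j : Fin n => ((m i.castSucc).choose (j + 1) : ℤ) -
      (m i.succ).choose (j + 1)) =
        ∑ x ∈ Ico (m i.succ) (m i.castSucc), fun j : Fin n => (x.choose j : ℤ) := fun i => by
    ext j
    rw [Finset.sum_apply, sum_Ico_choose_eq_sub _ (hm i)]
  rw [hrows, det_succ_column_zero, Fin.sum_univ_succ]
  simp only [of_apply, Fin.cases_zero, Fin.cases_succ, Fin.val_zero, Nat.choose_zero_right,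
    sub_self, mul_zero, zero_mul, sum_const_zero, add_zero, pow_zero, one_mul, Nat.cast_one]
  have hmultilinear :=
    (detRowAlternating : (Fin n → ℤ) [⋀^Fin n]→ₗ[ℤ] ℤ).toMultilinearMap.map_sum_finset
      (fun _ x (j : Fin n) => (x.choose j : ℤ)) (fun i : Fin n => Ico (m i.succ) (m i.castSucc))
  rw [hneg, det_neg, Fintype.card_fin]
  exact congrArg _ ((congrArg det (funext hrow_sum)).trans hmultilinear)

theorem vandermondeProd_succ {n : ℕ} (m : Fin (n + 1) → ℕ)
    (hm : ∀ i : Fin n, m i.succ ≤ m i.castSucc) :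
    vandermondeProd m = n ! * ∑ l ∈ Fintype.piFinset
      (fun i : Fin n => Ico (m i.succ) (m i.castSucc)), vandermondeProd l := by
  simp only [vandermondeProd_eq_det_choose, det_choose_succ m hm, ← mul_sum,
    Fin.prod_univ_castSucc, Fin.val_castSucc, Fin.val_last, Nat.choose_succ_succ' n 1,
    Nat.choose_one_right, pow_add]
  have hsq : ((-1 : ℤ) ^ n) * (-1) ^ n = 1 := by rw [← mul_pow]; simp
  linear_combination (n ! : ℤ) * (-1) ^ n.choose 2 * (∏ i : Fin n, ((i : ℕ)! : ℤ)) *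
    (∑ l ∈ Fintype.piFinset (fun i : Fin n => Ico (m i.succ) (m i.castSucc)),
      (of fun i j : Fin n => ((l i).choose j : ℤ)).det) * hsq

theorem vandermondeProd_addStaircase_succ {n : ℕ} (a : Fin (n + 1) → ℕ)
    (ha : ∀ i : Fin n, a i.succ ≤ a i.castSucc) :
    vandermondeProd (addStaircase a) = n ! * ∑ t ∈ Fintype.piFinset
      (fun i : Fin n => Icc (a i.succ) (a i.castSucc)), vandermondeProd (addStaircase t) := by
  have hstair : ∀ i : Fin n, addStaircase a i.succ ≤ addStaircase a i.castSucc := fun i => by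
    have := ha i
    simp only [addStaircase, Fin.val_succ, Fin.val_castSucc]
    omega
  have hbox : (fun i : Fin n => Ico (addStaircase a i.succ) (addStaircase a i.castSucc)) =
      fun i : Fin n => (Icc (a i.succ) (a i.castSucc)).image (· + (n - 1 - (i : ℕ))) := by
    ext i x
    have := ha i
    simp only [addStaircase, Fin.val_succ, Fin.val_castSucc, image_add_right_Icc, mem_Ico,
      mem_Icc]
    omega
  have hinj : Set.InjOn (fun (t : Fin n → ℕ) i => t i + (n - 1 - i))
      (Fintype.piFinset fun i : Fin n => Icc (a i.succ) (a i.castSucc)) :=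
    fun t _ t' _ h => funext fun i => Nat.add_right_cancel (congrFun h i)
  rw [vandermondeProd_succ _ hstair, hbox, Fintype.piFinset_image, sum_image hinj]
  rfl

theorem mem_ssytFinset {n : ℕ} {μ : YoungDiagram} {T : {c // c ∈ μ.cells} → Fin n} :
    T ∈ ssytFinset n μ ↔
      (∀ c d : {c // c ∈ μ.cells}, c.1.1 = d.1.1 → c.1.2 ≤ d.1.2 → T c ≤ T d) ∧
      (∀ c d : {c // c ∈ μ.cells}, c.1.2 = d.1.2 → c.1.1 < d.1.1 → T c < T d) := by
  simp [ssytFinset]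

section Tableau

variable {n : ℕ} {μ : YoungDiagram} {T : {c // c ∈ μ.cells} → Fin n}

theorem monotone_of_mem_ssytFinset (hT : T ∈ ssytFinset n μ) : Monotone T := by
  rintro ⟨⟨i, q⟩, hc⟩ ⟨⟨i', q'⟩, hd⟩ ⟨hi : i ≤ i', hq : q ≤ q'⟩
  have hcorner : (i, q') ∈ μ.cells := μ.up_left_mem hi le_rfl hd
  calc T ⟨(i, q), hc⟩ ≤ T ⟨(i, q'), hcorner⟩ := (mem_ssytFinset.1 hT).1 _ _ rfl hq
    _ ≤ T ⟨(i', q'), hd⟩ := by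
      rcases hi.eq_or_lt with rfl | hlt
      · exact le_rfl
      · exact ((mem_ssytFinset.1 hT).2 ⟨(i, q'), hcorner⟩ ⟨(i', q'), hd⟩ rfl hlt).le

theorem row_le_of_mem_ssytFinset (hT : T ∈ ssytFinset n μ) (c : {c // c ∈ μ.cells}) :
    c.1.1 ≤ T c := by
  obtain ⟨⟨i, q⟩, hc⟩ := c
  induction i with
  | zero => exact Nat.zero_le _
  | succ i ih =>
    have hup : (i, q) ∈ μ.cells := μ.up_left_mem (Nat.le_succ i) le_rfl hc
    exact (ih hup).trans_lt ((mem_ssytFinset.1 hT).2 ⟨_, hup⟩ ⟨_, hc⟩ rfl (Nat.lt_succ_self i))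

theorem ssytFinset_eq_empty (h : n < μ.colLen 0) : ssytFinset n μ = ∅ := by
  refine eq_empty_of_forall_notMem fun T hT => ?_
  have hcell : (n, 0) ∈ μ.cells := YoungDiagram.mem_iff_lt_colLen.2 h
  exact (T ⟨_, hcell⟩).2.not_ge (row_le_of_mem_ssytFinset hT ⟨_, hcell⟩)

theorem ssytFinset_nonempty (h : μ.colLen 0 ≤ n) : (ssytFinset n μ).Nonempty := by
  refine ⟨fun c => ⟨c.1.1, ?_⟩, mem_ssytFinset.2 ⟨fun c d hcd _ => ?_, fun c d _ hcd => hcd⟩⟩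
  · have hc : c.1.1 < μ.colLen c.1.2 := YoungDiagram.mem_iff_lt_colLen.1 c.2
    exact hc.trans_le ((μ.colLen_anti 0 _ (Nat.zero_le _)).trans h)
  · exact Fin.mk_le_mk.2 hcd.le

def entryShape (hT : Monotone T) (k : ℕ) : YoungDiagram where
  cells := μ.cells.filter fun c => ∃ h : c ∈ μ.cells, (T ⟨c, h⟩ : ℕ) < k
  isLowerSet := by
    intro c d hdc hc
    obtain ⟨-, hcμ, hck⟩ := mem_filter.1 hc
    have hdμ : d ∈ μ.cells := μ.isLowerSet hdc hcμ
    have hle : (T ⟨d, hdμ⟩ : ℕ) ≤ T ⟨c, hcμ⟩ :=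
      hT (show (⟨d, hdμ⟩ : {c // c ∈ μ.cells}) ≤ _ from hdc)
    exact mem_filter.2 ⟨hdμ, hdμ, hle.trans_lt hck⟩

theorem mem_entryShape {hT : Monotone T} {k : ℕ} {c : ℕ × ℕ} :
    c ∈ entryShape hT k ↔ ∃ h : c ∈ μ.cells, (T ⟨c, h⟩ : ℕ) < k := by
  rw [← YoungDiagram.mem_cells]
  exact mem_filter.trans (and_iff_right_of_imp fun ⟨h, _⟩ => h)

end Tableau

section HorizontalStrip

variable {n : ℕ} {μ ν : YoungDiagram}

def extendByLast (T : {c // c ∈ ν.cells} → Fin n) : {c // c ∈ μ.cells} → Fin (n + 1) :=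
  fun c => if h : c.1 ∈ ν.cells then (T ⟨c.1, h⟩).castSucc else Fin.last n

theorem val_extendByLast_lt_iff (T : {c // c ∈ ν.cells} → Fin n) (c : {c // c ∈ μ.cells}) :
    (extendByLast T c : ℕ) < n ↔ c.1 ∈ ν.cells := by
  unfold extendByLast
  split_ifs with h <;> simp [h]

theorem extendByLast_mem_ssytFinset (hstrip : ∀ i q, (i + 1, q) ∈ μ → (i, q) ∈ ν)
    {T : {c // c ∈ ν.cells} → Fin n} (hT : T ∈ ssytFinset n ν) :
    (extendByLast T : {c // c ∈ μ.cells} → Fin (n + 1)) ∈ ssytFinset (n + 1) μ := by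
  obtain ⟨hrow, hcol⟩ := mem_ssytFinset.1 hT
  refine mem_ssytFinset.2 ⟨fun c d hcd hq => ?_, fun c d hq hcd => ?_⟩ <;> unfold extendByLast
  · by_cases hd : d.1 ∈ ν.cells
    · have hc : c.1 ∈ ν.cells := ν.isLowerSet (show c.1 ≤ d.1 from ⟨hcd.le, hq⟩) hd
      rw [dif_pos hc, dif_pos hd]
      exact Fin.castSucc_le_castSucc_iff.2 (hrow ⟨_, hc⟩ ⟨_, hd⟩ hcd hq)
    · rw [dif_neg hd]
      exact Fin.le_last _
  · have hc : c.1 ∈ ν.cells := hstrip _ _ (μ.up_left_mem hcd hq.le d.2)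
    rw [dif_pos hc]
    by_cases hd : d.1 ∈ ν.cells
    · rw [dif_pos hd]
      exact Fin.castSucc_lt_castSucc_iff.2 (hcol ⟨_, hc⟩ ⟨_, hd⟩ hq hcd)
    · rw [dif_neg hd]
      exact Fin.castSucc_lt_last _

theorem card_ssytFinset_eq_card_filter (hνμ : ν ≤ μ)
    (hstrip : ∀ i q, (i + 1, q) ∈ μ → (i, q) ∈ ν) :
    #(ssytFinset n ν) = #{T ∈ ssytFinset (n + 1) μ | ∀ c, (T c : ℕ) < n ↔ c.1 ∈ ν} := by
  refine card_bij (fun T _ => extendByLast T) (fun T hT => mem_filter.2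
    ⟨extendByLast_mem_ssytFinset hstrip hT, val_extendByLast_lt_iff T⟩)
    (fun T₁ _ T₂ _ h => funext fun c => ?_) (fun T hT => ?_)
  · simpa [extendByLast, c.2] using congrFun h ⟨c.1, hνμ c.2⟩
  · obtain ⟨hT, hlt⟩ := mem_filter.1 hT
    obtain ⟨hrow, hcol⟩ := mem_ssytFinset.1 hT
    refine ⟨fun c => Fin.castLT (T ⟨c.1, hνμ c.2⟩) ((hlt _).2 c.2),
      mem_ssytFinset.2 ⟨fun c d h1 h2 => hrow _ _ h1 h2, fun c d h1 h2 => hcol _ _ h1 h2⟩,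
      funext fun c => ?_⟩
    by_cases hc : c.1 ∈ ν.cells
    · simp [extendByLast, hc]
    · have hge := (hlt c).not.2 hc
      have hle := (T c).is_le
      simp only [extendByLast, dif_neg hc]
      ext
      simp only [Fin.val_last]
      omega

end HorizontalStrip

noncomputable def ssytFiber (n : ℕ) (μ : YoungDiagram) (t : Fin n → ℕ) :
    Finset ({c // c ∈ μ.cells} → Fin (n + 1)) :=
  {T ∈ ssytFinset (n + 1) μ | ∀ c, (T c : ℕ) < n ↔ ∃ h : c.1.1 < n, c.1.2 < t ⟨c.1.1, h⟩}

theorem lt_iff_of_mem_ssytFiber {n : ℕ} {μ : YoungDiagram} {t : Fin n → ℕ}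
    (ht : ∀ i, t i ≤ μ.rowLen i) {T : {c // c ∈ μ.cells} → Fin (n + 1)}
    (hT : T ∈ ssytFiber n μ t) (i : Fin n) (q : ℕ) :
    q < t i ↔ ∃ h : ((i : ℕ), q) ∈ μ.cells, (T ⟨_, h⟩ : ℕ) < n := by
  have hpred := (mem_filter.1 hT).2
  refine ⟨fun hq => ?_, fun ⟨hcell, hlt⟩ => ((hpred ⟨_, hcell⟩).1 hlt).2⟩
  have hcell : ((i : ℕ), q) ∈ μ.cells := YoungDiagram.mem_iff_lt_rowLen.2 (hq.trans_le (ht i))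
  exact ⟨hcell, (hpred ⟨_, hcell⟩).2 ⟨i.2, hq⟩⟩

theorem card_ssytFinset_succ (n : ℕ) (μ : YoungDiagram) :
    #(ssytFinset (n + 1) μ) = ∑ t ∈ Fintype.piFinset
      (fun i : Fin n => Icc (μ.rowLen (i + 1)) (μ.rowLen i)), #(ssytFiber n μ t) := by
  classical
  set S := Fintype.piFinset fun i : Fin n => Icc (μ.rowLen (i + 1)) (μ.rowLen i)
  have hle : ∀ t ∈ S, ∀ i, t i ≤ μ.rowLen i := fun t ht i =>
    (mem_Icc.1 (Fintype.mem_piFinset.1 ht i)).2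
  have hdisj : (S : Set (Fin n → ℕ)).PairwiseDisjoint (ssytFiber n μ) := by
    intro t ht t' ht' hne
    refine disjoint_left.2 fun T hT hT' => hne (funext fun i => eq_of_forall_lt_iff fun q => ?_)
    rw [lt_iff_of_mem_ssytFiber (hle t ht) hT, lt_iff_of_mem_ssytFiber (hle t' ht') hT']
  rw [← card_biUnion hdisj]
  congr 1
  ext T
  refine ⟨fun hT => mem_biUnion.2 ?_, fun hT => (mem_filter.1 (mem_biUnion.1 hT).choose_spec.2).1⟩
  obtain ⟨-, hcolT⟩ := mem_ssytFinset.1 hT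
  set ν := entryShape (monotone_of_mem_ssytFinset hT) n
  refine ⟨fun i => ν.rowLen i, Fintype.mem_piFinset.2 fun i => mem_Icc.2 ⟨?_, ?_⟩,
    mem_filter.2 ⟨hT, fun c => ⟨fun hlt => ?_, fun ⟨_, hq⟩ => ?_⟩⟩⟩
  · refine le_of_forall_lt fun q hq => ?_
    have hbelow : ((i : ℕ) + 1, q) ∈ μ.cells := YoungDiagram.mem_iff_lt_rowLen.2 hq
    have hcell : ((i : ℕ), q) ∈ μ.cells := μ.up_left_mem (Nat.le_succ _) le_rfl hbelow
    have hlt := hcolT ⟨_, hcell⟩ ⟨_, hbelow⟩ rfl (Nat.lt_succ_self _)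
    have hle := (T ⟨_, hbelow⟩).is_le
    exact YoungDiagram.mem_iff_lt_rowLen.1 (mem_entryShape.2 ⟨hcell, by omega⟩)
  · exact le_of_forall_lt fun q hq =>
      YoungDiagram.mem_iff_lt_rowLen.1 (mem_entryShape.1 (YoungDiagram.mem_iff_lt_rowLen.2 hq)).1
  · exact ⟨(row_le_of_mem_ssytFinset hT c).trans_lt hlt,
      YoungDiagram.mem_iff_lt_rowLen.1 (mem_entryShape.2 ⟨c.2, hlt⟩)⟩
  · exact (mem_entryShape.1 (YoungDiagram.mem_iff_lt_rowLen.2 hq)).2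

theorem mem_ofRowLens_ofFn {n : ℕ} {t : Fin n → ℕ} (ht : Antitone t) {c : ℕ × ℕ} :
    c ∈ YoungDiagram.ofRowLens (List.ofFn t) ht.sortedGE_ofFn ↔
      ∃ h : c.1 < n, c.2 < t ⟨c.1, h⟩ := by
  simp [YoungDiagram.mem_ofRowLens]

theorem exists_card_ssytFiber_eq {n : ℕ} {μ : YoungDiagram} (h : μ.colLen 0 ≤ n + 1)
    {t : Fin n → ℕ}
    (ht : t ∈ Fintype.piFinset fun i : Fin n => Icc (μ.rowLen (i + 1)) (μ.rowLen i)) :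
    ∃ ν : YoungDiagram, ν.colLen 0 ≤ n ∧ (fun i : Fin n => ν.rowLen i) = t ∧
      #(ssytFiber n μ t) = #(ssytFinset n ν) := by
  have hbounds := fun i => mem_Icc.1 (Fintype.mem_piFinset.1 ht i)
  have hanti : Antitone t := fun i j hij => by
    rcases hij.eq_or_lt with rfl | hlt
    · exact le_rfl
    · exact (hbounds j).2.trans ((μ.rowLen_anti _ _ hlt).trans (hbounds i).1)
  set ν := YoungDiagram.ofRowLens (List.ofFn t) hanti.sortedGE_ofFn
  have hmem : ∀ c, c ∈ ν ↔ ∃ h : c.1 < n, c.2 < t ⟨c.1, h⟩ := fun c => mem_ofRowLens_ofFn hanti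
  have hνμ : ν ≤ μ := fun c hc => by
    obtain ⟨h, hq⟩ := (hmem c).1 hc
    exact YoungDiagram.mem_iff_lt_rowLen.2 (hq.trans_le (hbounds _).2)
  have hstrip : ∀ i q, (i + 1, q) ∈ μ → (i, q) ∈ ν := fun i q hq => by
    have hi : i < n := by
      have := YoungDiagram.mem_iff_lt_colLen.1 (μ.up_left_mem le_rfl (Nat.zero_le q) hq)
      omega
    exact (hmem _).2 ⟨hi, (YoungDiagram.mem_iff_lt_rowLen.1 hq).trans_le (hbounds ⟨i, hi⟩).1⟩
  refine ⟨ν, ?_, funext fun i => eq_of_forall_lt_iff fun q => ?_, ?_⟩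
  · by_contra! hn
    obtain ⟨h, -⟩ := (hmem _).1 (YoungDiagram.mem_iff_lt_colLen.2 hn)
    exact lt_irrefl n h
  · rw [← YoungDiagram.mem_iff_lt_rowLen, hmem]
    exact ⟨fun ⟨_, hq⟩ => hq, fun hq => ⟨i.2, hq⟩⟩
  · have hcard := card_ssytFinset_eq_card_filter (n := n) hνμ hstrip
    simp only [hmem] at hcard
    exact hcard.symm

theorem card_ssytFinset_mul_prod_factorial {n : ℕ} {μ : YoungDiagram} (h : μ.colLen 0 ≤ n) :
    (#(ssytFinset n μ) : ℤ) * ∏ i : Fin n, ((i : ℕ)! : ℤ) =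
      vandermondeProd (addStaircase fun i : Fin n => μ.rowLen i) := by
  induction n generalizing μ with
  | zero =>
    have hcard : #(ssytFinset 0 μ) = 1 :=
      le_antisymm (card_le_one.2 fun T _ T' _ => funext fun c => (T c).elim0)
        (ssytFinset_nonempty h).card_pos
    simp [hcard, vandermondeProd]
  | succ n ih =>
    have hfiber : ∀ t ∈ Fintype.piFinset fun i : Fin n => Icc (μ.rowLen (i + 1)) (μ.rowLen i),
        (#(ssytFiber n μ t) : ℤ) * ∏ i : Fin n, ((i : ℕ)! : ℤ) =
          vandermondeProd (addStaircase t) := fun t ht => by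
      obtain ⟨ν, hcolLen, hrowLen, hcard⟩ := exists_card_ssytFiber_eq h ht
      rw [hcard, ih hcolLen, hrowLen]
    have hanti : ∀ i : Fin n, μ.rowLen (i.succ : ℕ) ≤ μ.rowLen (i.castSucc : ℕ) :=
      fun i => μ.rowLen_anti _ _ (Nat.le_succ _)
    rw [card_ssytFinset_succ, vandermondeProd_addStaircase_succ _ hanti, Fin.prod_univ_castSucc]
    simp only [Fin.val_castSucc, Fin.val_last, Fin.val_succ]
    rw [← sum_congr rfl hfiber, Nat.cast_sum, sum_mul, mul_sum]
    exact sum_congr rfl fun _ _ => by ring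

theorem prod_mul_prod_eq_factorial {ι κ : Type*} {s : Finset ι} {t : Finset κ} {f : ι → ℕ}
    {g : κ → ℕ} {N : ℕ} (hf : Set.InjOn f s) (hg : Set.InjOn g t)
    (hfg : ∀ a ∈ s, ∀ b ∈ t, f a ≠ g b) (hfN : ∀ a ∈ s, f a ∈ Icc 1 N)
    (hgN : ∀ b ∈ t, g b ∈ Icc 1 N) (hcard : #s + #t = N) :
    (∏ a ∈ s, f a) * ∏ b ∈ t, g b = N ! := by
  classical
  have hdisj : Disjoint (s.image f) (t.image g) := disjoint_left.2 fun x hx hx' => by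
    obtain ⟨a, ha, rfl⟩ := mem_image.1 hx
    obtain ⟨b, hb, hab⟩ := mem_image.1 hx'
    exact hfg a ha b hb hab.symm
  have hunion : s.image f ∪ t.image g = Icc 1 N := by
    refine eq_of_subset_of_card_le (union_subset (image_subset_iff.2 hfN)
      (image_subset_iff.2 hgN)) ?_
    rw [card_union_of_disjoint hdisj, card_image_of_injOn hf, card_image_of_injOn hg,
      Nat.card_Icc]
    omega
  calc (∏ a ∈ s, f a) * ∏ b ∈ t, g b = (∏ x ∈ s.image f, x) * ∏ x ∈ t.image g, x := by
        rw [prod_image hf, prod_image hg]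
    _ = N ! := by
        rw [← prod_union hdisj, hunion, ← Ico_add_one_right_eq_Icc, prod_Ico_id_eq_factorial]

namespace YoungDiagram

def hookLength (μ : YoungDiagram) (c : ℕ × ℕ) : ℕ :=
  (μ.rowLen c.1 - c.2) + (μ.colLen c.2 - c.1) - 1

theorem lt_rowLen_iff_lt_colLen (μ : YoungDiagram) {i q : ℕ} :
    q < μ.rowLen i ↔ i < μ.colLen q :=
  mem_iff_lt_rowLen.symm.trans mem_iff_lt_colLen

theorem hookLength_injOn_row (μ : YoungDiagram) (i : ℕ) :
    Set.InjOn (fun q => μ.hookLength (i, q)) (range (μ.rowLen i)) := by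
  intro q hq q' hq' hqq'
  have hq := mem_range.1 hq
  have hq' := mem_range.1 hq'
  have := μ.lt_rowLen_iff_lt_colLen.1 hq
  have := μ.lt_rowLen_iff_lt_colLen.1 hq'
  simp only [hookLength] at hqq'
  rcases le_total q q' with hle | hle
  · have := μ.colLen_anti q q' hle
    omega
  · have := μ.colLen_anti q' q hle
    omega

variable {n : ℕ} {μ : YoungDiagram}

theorem hookLength_mem_Icc (h : μ.colLen 0 ≤ n) (i : Fin n) {q : ℕ} (hq : q < μ.rowLen i) :
    μ.hookLength (i, q) ∈ Icc 1 (addStaircase (fun j : Fin n => μ.rowLen j) i) := by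
  have := μ.lt_rowLen_iff_lt_colLen.1 hq
  have := (μ.colLen_anti 0 q (Nat.zero_le q)).trans h
  simp only [hookLength, addStaircase, mem_Icc]
  omega

theorem hookLength_ne_addStaircase_sub (h : μ.colLen 0 ≤ n) {i j : Fin n} (hij : i < j)
    {q : ℕ} (hq : q < μ.rowLen i) :
    μ.hookLength (i, q) ≠ addStaircase (fun j : Fin n => μ.rowLen j) i -
      addStaircase (fun j : Fin n => μ.rowLen j) j := by
  -- over `ℤ`, `hook - (m i - m j) = (rowLen j - q) + (colLen q - 1 - j)`, which is positive
  -- if `(j, q)` is a cell of `μ` and negative otherwise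
  have := μ.lt_rowLen_iff_lt_colLen.1 hq
  have := (μ.colLen_anti 0 q (Nat.zero_le q)).trans h
  have := μ.rowLen_anti i j hij.le
  have := μ.lt_rowLen_iff_lt_colLen (i := j) (q := q)
  have : (i : ℕ) < j := hij
  have := j.2
  simp only [hookLength, addStaircase]
  omega

theorem prod_hookLength_row_mul (h : μ.colLen 0 ≤ n) (i : Fin n) :
    (∏ q ∈ range (μ.rowLen i), (μ.hookLength (i, q) : ℤ)) *
      ∏ j ∈ Ioi i, ((addStaircase (fun j : Fin n => μ.rowLen j) i : ℤ) -
        addStaircase (fun j : Fin n => μ.rowLen j) j) =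
      (addStaircase (fun j : Fin n => μ.rowLen j) i)! := by
  set m := addStaircase fun j : Fin n => μ.rowLen j
  have hm : StrictAnti m := addStaircase_strictAnti fun j j' hjj' => μ.rowLen_anti _ _ hjj'
  have hfact := prod_mul_prod_eq_factorial (t := Ioi i) (g := fun j => m i - m j) (N := m i)
    (μ.hookLength_injOn_row i)
    (fun j hj j' hj' hjj' => by
      have := hm (mem_Ioi.1 hj)
      have := hm (mem_Ioi.1 hj')
      exact hm.injective (by simp only at hjj'; omega))
    (fun q hq j hj => hookLength_ne_addStaircase_sub h (mem_Ioi.1 hj) (mem_range.1 hq))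
    (fun q hq => hookLength_mem_Icc h i (mem_range.1 hq))
    (fun j hj => by
      have := hm (mem_Ioi.1 hj)
      simp only [mem_Icc]
      omega)
    (by simp only [card_range, Fin.card_Ioi, m, addStaircase])
  rw [← hfact, Nat.cast_mul, Nat.cast_prod, Nat.cast_prod]
  congr 1
  exact prod_congr rfl fun j hj => (Nat.cast_sub (hm (mem_Ioi.1 hj)).le).symm

theorem prod_content_row_mul (μ : YoungDiagram) (i : Fin n) :
    (∏ q ∈ range (μ.rowLen i), ((n : ℤ) + q - i)) * ((n - 1 - i : ℕ)! : ℤ) =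
      (addStaircase (fun j : Fin n => μ.rowLen j) i)! := by
  have hcontent : ∀ q : ℕ, (n : ℤ) + q - i = ((n - 1 - i + 1 + q : ℕ) : ℤ) := fun q => by
    have := i.2
    push_cast [Nat.cast_sub (show (i : ℕ) ≤ n - 1 by omega), Nat.cast_sub (show 1 ≤ n by omega)]
    ring
  simp_rw [hcontent]
  rw [← Nat.cast_prod, ← Nat.ascFactorial_eq_prod_range, ← Nat.cast_mul, mul_comm,
    Nat.factorial_mul_ascFactorial, addStaircase, add_comm]

theorem prod_cells_eq_prod_rows {M : Type*} [CommMonoid M] (h : μ.colLen 0 ≤ n)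
    (f : ℕ × ℕ → M) :
    ∏ c ∈ μ.cells, f c = ∏ i : Fin n, ∏ q ∈ range (μ.rowLen i), f (i, q) := by
  have hrow : ∀ c ∈ μ.cells, c.1 ∈ range n := fun c hc => mem_range.2 <|
    (mem_iff_lt_colLen.1 hc).trans_le ((μ.colLen_anti 0 _ (Nat.zero_le _)).trans h)
  rw [Fin.prod_univ_eq_prod_range (fun i => ∏ q ∈ range (μ.rowLen i), f (i, q)),
    ← prod_fiberwise_of_maps_to hrow]
  refine prod_congr rfl fun i _ => ?_
  rw [show {c ∈ μ.cells | c.1 = i} = μ.row i from rfl, row_eq_prod, prod_product,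
    prod_singleton]

end YoungDiagram

open YoungDiagram in
theorem card_ssytFinset_mul_prod_hookLength {n : ℕ} {μ : YoungDiagram} (h : μ.colLen 0 ≤ n) :
    (#(ssytFinset n μ) : ℤ) * ∏ c ∈ μ.cells, (μ.hookLength c : ℤ) =
      ∏ c ∈ μ.cells, ((n : ℤ) + c.2 - c.1) := by
  have hF : ∏ i : Fin n, ((i : ℕ)! : ℤ) ≠ 0 := prod_ne_zero_iff.2 fun i _ => by positivity
  have hreflect : ∏ i : Fin n, ((n - 1 - i : ℕ)! : ℤ) = ∏ i : Fin n, ((i : ℕ)! : ℤ) := by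
    simp only [Fin.prod_univ_eq_prod_range (fun i => ((n - 1 - i : ℕ)! : ℤ)),
      Fin.prod_univ_eq_prod_range (fun i => ((i : ℕ)! : ℤ)),
      prod_range_reflect (fun i => ((i)! : ℤ))]
  apply mul_right_cancel₀ hF
  calc (#(ssytFinset n μ) : ℤ) * (∏ c ∈ μ.cells, (μ.hookLength c : ℤ)) *
        ∏ i : Fin n, ((i : ℕ)! : ℤ)
      = (∏ c ∈ μ.cells, (μ.hookLength c : ℤ)) *
          vandermondeProd (addStaircase fun i : Fin n => μ.rowLen i) := by
        rw [← card_ssytFinset_mul_prod_factorial h]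
        ring
    _ = ∏ i : Fin n, ((addStaircase (fun j : Fin n => μ.rowLen j) i)! : ℤ) := by
        rw [prod_cells_eq_prod_rows h, vandermondeProd, ← prod_mul_distrib]
        exact prod_congr rfl fun i _ => prod_hookLength_row_mul h i
    _ = (∏ c ∈ μ.cells, ((n : ℤ) + c.2 - c.1)) * ∏ i : Fin n, ((i : ℕ)! : ℤ) := by
        rw [prod_cells_eq_prod_rows h, ← hreflect, ← prod_mul_distrib]
        exact prod_congr rfl fun i _ => (prod_content_row_mul μ i).symm

/-- **Stanley's hook content formula.**  The number of semistandard Young tableaux of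
shape `I = μ` with entries in `{1, …, n}` equals `Π_{(p,q) ∈ I} (n + q − p)/h(p,q)`,
where `h(p,q) = (i_p − q) + (ĩ_q − p) + 1` is the hook length of the cell `(p,q)`
(rows and columns indexed from `1`; below cells are `0`-indexed, so the content
`q − p` is unchanged and `h(c) = (rowLen c.1 − c.2) + (colLen c.2 − c.1) − 1`).
Equivalently `s_I(1, …, 1)` (with `n` ones) equals this product; in particular
`s_I(1, …, 1) > 0` whenever `I` has at most `n` parts. -/
theorem hook_content_formula (n : ℕ) (μ : YoungDiagram) :
    (eval (fun _ => (1 : ℤ)) (schurPoly n μ) = ((ssytFinset n μ).card : ℤ)) ∧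
    (((ssytFinset n μ).card : ℤ) *
        ∏ c ∈ μ.cells, (((μ.rowLen c.1 - c.2) + (μ.colLen c.2 - c.1) - 1 : ℕ) : ℤ)
      = ∏ c ∈ μ.cells, ((n : ℤ) + (c.2 : ℤ) - (c.1 : ℤ))) ∧
    (μ.colLen 0 ≤ n → 0 < eval (fun _ => (1 : ℤ)) (schurPoly n μ)) := by
  have heval : eval (fun _ => (1 : ℤ)) (schurPoly n μ) = #(ssytFinset n μ) := by
    simp [schurPoly]
  refine ⟨heval, ?_, fun h => heval ▸ mod_cast (ssytFinset_nonempty h).card_pos⟩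
  rcases le_or_gt (μ.colLen 0) n with h | h
  · exact card_ssytFinset_mul_prod_hookLength h
  · rw [ssytFinset_eq_empty h, card_empty, Nat.cast_zero, zero_mul, eq_comm]
    exact prod_eq_zero (YoungDiagram.mem_iff_lt_colLen.2 h) (by simp)
end
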